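/- Let f_θ : ℝ^d → ℝ be the two-hidden-layer ReLU network f_θ(x) = w₃ᵀ ReLU(W₂ ReLU(W₁ x + b₁) + b₂) + b₃, with W₁ ∈ ℝ^{n₁×d}, b₁ ∈ ℝ^{n₁}, W₂ ∈ ℝ^{n₂×n₁}, b₂ ∈ ℝ^{n₂}, w₃ ∈ ℝ^{n₂}, b₃ ∈ ℝ. Assume f_θ is convex on ℝ^d. Then for every isolated neuron ν of the FIRST hidden layer (i.e. ν ∈ {1,…,n₁} with 𝔛_ν ≠ ∅) and every x ∈ 𝔛_ν, one has ⟨a₂(x), w₃ ⊙ W₂[:,ν]⟩ ≥ 0, where ⊙ is the entrywise product; equivalently, min over x ∈ 𝔛_ν of ⟨a₂(x), w₃ ⊙ W₂[:,ν]⟩ ≥ 0. -/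

import Mathlib

open Set Metric
open scoped RealInnerProductSpace

/-- The ReLU function. -/
noncomputable def relu (t : ℝ) : ℝ := max t 0

/-- The (binary) activation associated to a pre-activation `z` is constant on a set `s`
if the sign condition `0 < z y` is the same for all points of `s`. -/
def ActConstOn {E : Type*} (z : E → ℝ) (s : Set E) : Prop :=
  ∀ y ∈ s, ∀ y' ∈ s, ((0 < z y) ↔ (0 < z y'))

/-- `𝔛 ν`: the set of inputs `x` such that, on every small enough ball around `x`,
the activation of every hidden neuron `μ ≠ ν` is constant while the activation of `ν`
is not constant.  A neuron `ν` is isolated when this set is nonempty. -/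
def Xiso {ι E : Type*} [PseudoMetricSpace E] (z : ι → E → ℝ) (ν : ι) : Set E :=
  {x | ∃ ε₀ > (0 : ℝ), ∀ ε : ℝ, 0 < ε → ε ≤ ε₀ →
    (∀ μ, μ ≠ ν → ActConstOn (z μ) (Metric.ball x ε)) ∧
    ¬ ActConstOn (z ν) (Metric.ball x ε)}

/-- Pre-activation of first-layer neuron `ν`: `z¹_ν(x) = (W₁ x + b₁)_ν`. -/
noncomputable def z1 {d n₁ : ℕ} (W₁ : Fin n₁ → EuclideanSpace ℝ (Fin d)) (b₁ : Fin n₁ → ℝ)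
    (ν : Fin n₁) (x : EuclideanSpace ℝ (Fin d)) : ℝ :=
  ⟪W₁ ν, x⟫ + b₁ ν

/-- Pre-activation of second-layer neuron `μ`: `z²_μ(x) = (W₂ ReLU(W₁ x + b₁) + b₂)_μ`. -/
noncomputable def z2 {d n₁ n₂ : ℕ} (W₁ : Fin n₁ → EuclideanSpace ℝ (Fin d)) (b₁ : Fin n₁ → ℝ)
    (W₂ : Fin n₂ → Fin n₁ → ℝ) (b₂ : Fin n₂ → ℝ)
    (μ : Fin n₂) (x : EuclideanSpace ℝ (Fin d)) : ℝ :=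
  ∑ ν, W₂ μ ν * relu (z1 W₁ b₁ ν x) + b₂ μ

/-- Pre-activations of all hidden neurons (from both hidden layers). -/
noncomputable def zHidden {d n₁ n₂ : ℕ} (W₁ : Fin n₁ → EuclideanSpace ℝ (Fin d))
    (b₁ : Fin n₁ → ℝ) (W₂ : Fin n₂ → Fin n₁ → ℝ) (b₂ : Fin n₂ → ℝ) :
    (Fin n₁ ⊕ Fin n₂) → EuclideanSpace ℝ (Fin d) → ℝ :=
  Sum.elim (z1 W₁ b₁) (z2 W₁ b₁ W₂ b₂)

/-- The two-hidden-layer ReLU network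
`f(x) = w₃ᵀ ReLU(W₂ ReLU(W₁ x + b₁) + b₂) + b₃`. -/
noncomputable def netF {d n₁ n₂ : ℕ} (W₁ : Fin n₁ → EuclideanSpace ℝ (Fin d))
    (b₁ : Fin n₁ → ℝ) (W₂ : Fin n₂ → Fin n₁ → ℝ) (b₂ w₃ : Fin n₂ → ℝ) (b₃ : ℝ)
    (x : EuclideanSpace ℝ (Fin d)) : ℝ :=
  ∑ μ, w₃ μ * relu (z2 W₁ b₁ W₂ b₂ μ x) + b₃

/-- The second-layer activation vector `a₂(x) ∈ {0,1}^{n₂}`. -/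
noncomputable def act2 {d n₁ n₂ : ℕ} (W₁ : Fin n₁ → EuclideanSpace ℝ (Fin d))
    (b₁ : Fin n₁ → ℝ) (W₂ : Fin n₂ → Fin n₁ → ℝ) (b₂ : Fin n₂ → ℝ)
    (x : EuclideanSpace ℝ (Fin d)) (μ : Fin n₂) : ℝ :=
  if 0 < z2 W₁ b₁ W₂ b₂ μ x then 1 else 0

/-- If the two-hidden-layer ReLU network `f(x) = w₃ᵀ ReLU(W₂ ReLU(W₁ x + b₁) + b₂) + b₃`
is convex on `ℝ^d`, then for every isolated neuron `ν` of the first hidden layer and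
every `x ∈ 𝔛_ν`, one has `⟪a₂(x), w₃ ⊙ W₂[:,ν]⟫ ≥ 0`. -/
theorem firstLayer_condition_of_convex {d n₁ n₂ : ℕ}
    (W₁ : Fin n₁ → EuclideanSpace ℝ (Fin d)) (b₁ : Fin n₁ → ℝ)
    (W₂ : Fin n₂ → Fin n₁ → ℝ) (b₂ w₃ : Fin n₂ → ℝ) (b₃ : ℝ)
    (hconv : ConvexOn ℝ Set.univ (netF W₁ b₁ W₂ b₂ w₃ b₃))
    (ν : Fin n₁) :
    ∀ x ∈ Xiso (zHidden W₁ b₁ W₂ b₂) (Sum.inl ν),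
      0 ≤ ∑ μ, act2 W₁ b₁ W₂ b₂ x μ * (w₃ μ * W₂ μ ν) := by

  intro x hx
  obtain ⟨ε₀, hε₀, hP⟩ := hx
  have relu_pos : ∀ s : ℝ, 0 ≤ s → relu s = s := fun s h => max_eq_left h
  have relu_neg : ∀ s : ℝ, s ≤ 0 → relu s = 0 := fun s h => max_eq_right h
  have haff : ∀ (κ : Fin n₁) (s : ℝ) (y : EuclideanSpace ℝ (Fin d)),
      z1 W₁ b₁ κ (y + s • (W₁ ν)) = z1 W₁ b₁ κ y + s * ⟪W₁ κ, W₁ ν⟫ := by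
    intro κ s y
    unfold z1
    rw [inner_add_right, real_inner_smul_right]
    ring
  have hvne : W₁ ν ≠ 0 := by
    intro h0
    obtain ⟨-, hnot⟩ := hP ε₀ hε₀ le_rfl
    apply hnot
    intro y hy y' hy'
    simp only [zHidden, Sum.elim_inl, z1, h0, inner_zero_left, zero_add]
  have hvnorm : (0:ℝ) < ‖W₁ ν‖ := norm_pos_iff.mpr hvne
  have hz0 : z1 W₁ b₁ ν x = 0 := by
    by_contra hne
    have habs : 0 < |z1 W₁ b₁ ν x| := abs_pos.mpr hne
    set ε : ℝ := min ε₀ (|z1 W₁ b₁ ν x| / ‖W₁ ν‖) with hεdef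
    have hεpos : 0 < ε := lt_min hε₀ (div_pos habs hvnorm)
    obtain ⟨-, hnot⟩ := hP ε hεpos (min_le_left _ _)
    apply hnot
    have key : ∀ w ∈ Metric.ball x ε, (0 < z1 W₁ b₁ ν w ↔ 0 < z1 W₁ b₁ ν x) := by
      intro w hw
      have hd : dist w x < ε := hw
      rw [dist_eq_norm] at hd
      have h1 : |z1 W₁ b₁ ν w - z1 W₁ b₁ ν x| ≤ ‖W₁ ν‖ * ‖w - x‖ := by
        have heq : z1 W₁ b₁ ν w - z1 W₁ b₁ ν x = ⟪W₁ ν, w - x⟫ := by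
          unfold z1; rw [inner_sub_right]; ring
        rw [heq]
        exact abs_real_inner_le_norm (W₁ ν) (w - x)
      have h2 : ‖W₁ ν‖ * ‖w - x‖ < |z1 W₁ b₁ ν x| := by
        have hεle : ε ≤ |z1 W₁ b₁ ν x| / ‖W₁ ν‖ := min_le_right _ _
        calc ‖W₁ ν‖ * ‖w - x‖ < ‖W₁ ν‖ * ε := mul_lt_mul_of_pos_left hd hvnorm
          _ ≤ ‖W₁ ν‖ * (|z1 W₁ b₁ ν x| / ‖W₁ ν‖) :=
              mul_le_mul_of_nonneg_left hεle (norm_nonneg _)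
          _ = |z1 W₁ b₁ ν x| := by field_simp
      have h3 : |z1 W₁ b₁ ν w - z1 W₁ b₁ ν x| < |z1 W₁ b₁ ν x| := lt_of_le_of_lt h1 h2
      rw [abs_lt] at h3
      rcases lt_or_gt_of_ne hne with h | h
      · rw [abs_of_neg h] at h3
        constructor <;> intro <;> linarith [h3.2]
      · rw [abs_of_pos h] at h3
        constructor <;> intro <;> linarith [h3.1]
    intro y hy y' hy'
    simp only [zHidden, Sum.elim_inl] at *
    rw [key y hy, key y' hy']
  obtain ⟨hconst, -⟩ := hP ε₀ hε₀ le_rfl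
  have hxball : x ∈ Metric.ball x ε₀ := mem_ball_self hε₀
  set t : ℝ := ε₀ / (2 * ‖W₁ ν‖) with ht
  have htpos : 0 < t := div_pos hε₀ (by positivity)
  have hmem : ∀ s : ℝ, |s| = t → x + s • (W₁ ν) ∈ Metric.ball x ε₀ := by
    intro s hs
    simp only [Metric.mem_ball, dist_eq_norm]
    have h1 : ‖x + s • (W₁ ν) - x‖ = |s| * ‖W₁ ν‖ := by
      rw [add_sub_cancel_left, norm_smul, Real.norm_eq_abs]
    have h2 : t * ‖W₁ ν‖ = ε₀ / 2 := by
      rw [ht]; field_simp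
    rw [h1, hs, h2]
    linarith
  set yp : EuclideanSpace ℝ (Fin d) := x + t • (W₁ ν) with hypdef
  set ym : EuclideanSpace ℝ (Fin d) := x + (-t) • (W₁ ν) with hymdef
  have hyp : yp ∈ Metric.ball x ε₀ := hmem t (abs_of_pos htpos)
  have hym : ym ∈ Metric.ball x ε₀ := hmem (-t) (by rw [abs_neg]; exact abs_of_pos htpos)
  set c : ℝ := ⟪W₁ ν, W₁ ν⟫ with hc
  have hcpos : 0 < c := by
    rw [hc, real_inner_self_eq_norm_sq]
    positivity
  -- ReLU of second layer on the ball
  have hrelu2 : ∀ μ, ∀ y ∈ Metric.ball x ε₀,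
      relu (z2 W₁ b₁ W₂ b₂ μ y) = act2 W₁ b₁ W₂ b₂ x μ * z2 W₁ b₁ W₂ b₂ μ y := by
    intro μ y hy
    have hcc := hconst (Sum.inr μ) (by simp) y hy x hxball
    simp only [zHidden, Sum.elim_inr] at hcc
    unfold act2
    by_cases h : 0 < z2 W₁ b₁ W₂ b₂ μ x
    · rw [if_pos h, one_mul, relu_pos _ (le_of_lt (hcc.mpr h))]
    · rw [if_neg h, zero_mul, relu_neg _ (le_of_not_gt (fun hcon => h (hcc.mp hcon)))]
  -- first layer, κ ≠ ν
  have h1sum : ∀ κ, κ ≠ ν → relu (z1 W₁ b₁ κ yp) + relu (z1 W₁ b₁ κ ym)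
      - 2 * relu (z1 W₁ b₁ κ x) = 0 := by
    intro κ hκ
    have hcc := hconst (Sum.inl κ) (by simp [hκ])
    simp only [zHidden, Sum.elim_inl] at hcc
    have haffs : z1 W₁ b₁ κ yp + z1 W₁ b₁ κ ym = 2 * z1 W₁ b₁ κ x := by
      rw [hypdef, hymdef, haff, haff]; ring
    by_cases h : 0 < z1 W₁ b₁ κ x
    · rw [relu_pos _ (le_of_lt ((hcc yp hyp x hxball).mpr h)),
        relu_pos _ (le_of_lt ((hcc ym hym x hxball).mpr h)), relu_pos _ h.le]
      linarith
    · rw [relu_neg _ (le_of_not_gt (fun hcon => h ((hcc yp hyp x hxball).mp hcon))),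
        relu_neg _ (le_of_not_gt (fun hcon => h ((hcc ym hym x hxball).mp hcon))),
        relu_neg _ (le_of_not_gt h)]
      ring
  -- neuron ν along the segment
  have hnup : relu (z1 W₁ b₁ ν yp) = t * c := by
    rw [hypdef, haff, hz0, zero_add, ← hc, relu_pos]
    positivity
  have hnum : relu (z1 W₁ b₁ ν ym) = 0 := by
    rw [hymdef, haff, hz0, zero_add, ← hc, relu_neg]
    nlinarith
  have hnux : relu (z1 W₁ b₁ ν x) = 0 := by rw [hz0]; simp [relu]
  -- second difference of z2
  have hz2diff : ∀ μ, z2 W₁ b₁ W₂ b₂ μ yp + z2 W₁ b₁ W₂ b₂ μ ym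
      - 2 * z2 W₁ b₁ W₂ b₂ μ x = W₂ μ ν * (t * c) := by
    intro μ
    simp only [z2]
    have hs : (∑ κ, W₂ μ κ * relu (z1 W₁ b₁ κ yp) + b₂ μ)
        + (∑ κ, W₂ μ κ * relu (z1 W₁ b₁ κ ym) + b₂ μ)
        - 2 * (∑ κ, W₂ μ κ * relu (z1 W₁ b₁ κ x) + b₂ μ)
        = ∑ κ, W₂ μ κ * (relu (z1 W₁ b₁ κ yp) + relu (z1 W₁ b₁ κ ym)
            - 2 * relu (z1 W₁ b₁ κ x)) := by
      have hb : (∑ κ, W₂ μ κ * relu (z1 W₁ b₁ κ yp) + b₂ μ)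
          + (∑ κ, W₂ μ κ * relu (z1 W₁ b₁ κ ym) + b₂ μ)
          - 2 * (∑ κ, W₂ μ κ * relu (z1 W₁ b₁ κ x) + b₂ μ)
          = (∑ κ, W₂ μ κ * relu (z1 W₁ b₁ κ yp))
          + (∑ κ, W₂ μ κ * relu (z1 W₁ b₁ κ ym))
          - 2 * (∑ κ, W₂ μ κ * relu (z1 W₁ b₁ κ x)) := by ring
      rw [hb, Finset.mul_sum, ← Finset.sum_add_distrib, ← Finset.sum_sub_distrib]
      exact Finset.sum_congr rfl (fun κ _ => by ring)
    rw [hs, Finset.sum_eq_single ν]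
    · rw [hnup, hnum, hnux]; ring
    · intro κ _ hκ
      rw [h1sum κ hκ, mul_zero]
    · intro h
      exact absurd (Finset.mem_univ ν) h
  -- second difference of f
  have esum : ∀ y ∈ Metric.ball x ε₀, ∑ μ, w₃ μ * relu (z2 W₁ b₁ W₂ b₂ μ y)
      = ∑ μ, w₃ μ * (act2 W₁ b₁ W₂ b₂ x μ * z2 W₁ b₁ W₂ b₂ μ y) :=
    fun y hy => Finset.sum_congr rfl (fun μ _ => by rw [hrelu2 μ y hy])
  have hfd : netF W₁ b₁ W₂ b₂ w₃ b₃ yp + netF W₁ b₁ W₂ b₂ w₃ b₃ ym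
      - 2 * netF W₁ b₁ W₂ b₂ w₃ b₃ x
      = (∑ μ, act2 W₁ b₁ W₂ b₂ x μ * (w₃ μ * W₂ μ ν)) * (t * c) := by
    simp only [netF]
    rw [esum yp hyp, esum ym hym, esum x hxball]
    have hb : ∀ A B C : ℝ, (A + b₃) + (B + b₃) - 2 * (C + b₃) = A + B - 2 * C := by
      intro A B C; ring
    rw [hb, Finset.mul_sum, ← Finset.sum_add_distrib, ← Finset.sum_sub_distrib,
      Finset.sum_mul]
    refine Finset.sum_congr rfl (fun μ _ => ?_)
    have h := hz2diff μ
    linear_combination (w₃ μ * act2 W₁ b₁ W₂ b₂ x μ) * h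
  have hcvx := hconv.2 (mem_univ yp) (mem_univ ym)
    (by norm_num : (0:ℝ) ≤ 1/2) (by norm_num : (0:ℝ) ≤ 1/2) (by norm_num : (1/2:ℝ)+1/2 = 1)
  have hmid : (1/2 : ℝ) • yp + (1/2 : ℝ) • ym = x := by
    rw [hypdef, hymdef]; module
  rw [hmid, smul_eq_mul, smul_eq_mul] at hcvx
  have hge : 0 ≤ (∑ μ, act2 W₁ b₁ W₂ b₂ x μ * (w₃ μ * W₂ μ ν)) * (t * c) := by
    rw [← hfd]; linarith
  nlinarith [mul_pos htpos hcpos]
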